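/- arXiv:2111.03108 — 2 statements merged into one kernel-verified Lean document; each statement's English description precedes it below -/
import Mathlib

section
/- Perturbation bound for softmax in absolute difference: if θ, η : V → ℝ satisfy |θ(v) − η(v)| ≤ Δ for all v ∈ V, then for every v, |softmax(θ)(v) − softmax(η)(v)| ≤ e^{2Δ} − 1. -/
noncomputable def softmax {V : Type*} [Fintype V] (θ : V → ℝ) (v : V) : ℝ :=
  Real.exp (θ v) / ∑ u, Real.exp (θ u)

lemma softmax_pert_key {V : Type*} [Fintype V] [Nonempty V]
    (a b : V → ℝ) (Δ : ℝ) (hΔ : 0 ≤ Δ)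
    (h : ∀ v, |a v - b v| ≤ Δ) (v : V) :
    softmax a v - softmax b v ≤ Real.exp (2 * Δ) - 1 := by
  have hSa : (0:ℝ) < ∑ u, Real.exp (a u) :=
    Finset.sum_pos (fun u _ => Real.exp_pos _) Finset.univ_nonempty
  have hSb : (0:ℝ) < ∑ u, Real.exp (b u) :=
    Finset.sum_pos (fun u _ => Real.exp_pos _) Finset.univ_nonempty
  have h1 : Real.exp (a v) ≤ Real.exp Δ * Real.exp (b v) := by
    rw [← Real.exp_add]
    apply Real.exp_le_exp.2
    have := (abs_le.1 (h v)).2; linarith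
  have h2 : ∑ u, Real.exp (b u) ≤ Real.exp Δ * ∑ u, Real.exp (a u) := by
    rw [Finset.mul_sum]
    apply Finset.sum_le_sum
    intro u _
    rw [← Real.exp_add]
    apply Real.exp_le_exp.2
    have := (abs_le.1 (h u)).1; linarith
  have hb1 : softmax b v ≤ 1 := by
    unfold softmax
    rw [div_le_one hSb]
    exact Finset.single_le_sum (fun u _ => (Real.exp_pos _).le) (Finset.mem_univ v)
  have hb0 : 0 ≤ softmax b v := div_nonneg (Real.exp_pos _).le hSb.le
  have hratio : softmax a v ≤ Real.exp (2 * Δ) * softmax b v := by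
    unfold softmax
    rw [div_le_iff₀ hSa]
    have hexpΔ : (0:ℝ) < Real.exp Δ := Real.exp_pos _
    have : Real.exp (2 * Δ) * (Real.exp (b v) / ∑ u, Real.exp (b u)) * ∑ u, Real.exp (a u)
        = Real.exp Δ * Real.exp (b v) * (Real.exp Δ * ∑ u, Real.exp (a u)) / ∑ u, Real.exp (b u) := by
      rw [two_mul, Real.exp_add]; field_simp
    rw [this, le_div_iff₀ hSb]
    calc Real.exp (a v) * ∑ u, Real.exp (b u)
        ≤ (Real.exp Δ * Real.exp (b v)) * (Real.exp Δ * ∑ u, Real.exp (a u)) := by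
          apply mul_le_mul h1 h2 hSb.le (by positivity)
      _ = _ := by ring
  have hexp1 : (1:ℝ) ≤ Real.exp (2 * Δ) := by
    rw [← Real.exp_zero]; exact Real.exp_le_exp.2 (by linarith)
  nlinarith [mul_le_of_le_one_right (by linarith : (0:ℝ) ≤ Real.exp (2*Δ) - 1) hb1]

theorem softmax_perturbation_abs {V : Type*} [Fintype V] [Nonempty V]
    (θ η : V → ℝ) (Δ : ℝ) (hΔ : 0 ≤ Δ)
    (h : ∀ v, |θ v - η v| ≤ Δ) :
    ∀ v, |softmax θ v - softmax η v| ≤ Real.exp (2 * Δ) - 1 := by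
  intro v
  rw [abs_sub_le_iff]
  constructor
  · exact softmax_pert_key θ η Δ hΔ h v
  · exact softmax_pert_key η θ Δ hΔ (fun u => by rw [abs_sub_comm]; exact h u) v
end

section
/- Proposition 1 core bound: let V be a finite set of next tokens and suppose the full model's logits decompose as θ(v) = θ_i(v) + θ_j(v) (one active global feature i and one active local feature j), while the global-only and local-only models have logits η(v) and μ(v). If |θ_i(v) − η(v)| ≤ Δ and |θ_j(v) − μ(v)| ≤ Δ for all v, then for every v, |softmax(θ_i + θ_j)(v) − softmax(η + μ)(v)| ≤ e^{4Δ} − 1. -/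
lemma softmax_le_exp_mul {V : Type*} [Fintype V] [Nonempty V]
    (f g : V → ℝ) (c : ℝ) (h : ∀ v, |f v - g v| ≤ c) (v : V) :
    softmax f v ≤ Real.exp (2 * c) * softmax g v := by
  have hgpos : (0:ℝ) < ∑ u, Real.exp (g u) :=
    Finset.sum_pos (fun u _ => Real.exp_pos _) Finset.univ_nonempty
  have hfpos : (0:ℝ) < ∑ u, Real.exp (f u) :=
    Finset.sum_pos (fun u _ => Real.exp_pos _) Finset.univ_nonempty
  have h1 : Real.exp (f v) ≤ Real.exp c * Real.exp (g v) := by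
    rw [← Real.exp_add]
    exact Real.exp_le_exp.mpr (by linarith [(abs_le.mp (h v)).2])
  have h2 : ∑ u, Real.exp (g u) ≤ Real.exp c * ∑ u, Real.exp (f u) := by
    rw [Finset.mul_sum]
    refine Finset.sum_le_sum fun u _ => ?_
    rw [← Real.exp_add]
    exact Real.exp_le_exp.mpr (by linarith [(abs_le.mp (h u)).1])
  unfold softmax
  rw [mul_div_assoc', div_le_div_iff₀ hfpos hgpos]
  calc Real.exp (f v) * ∑ u, Real.exp (g u)
      ≤ (Real.exp c * Real.exp (g v)) * (Real.exp c * ∑ u, Real.exp (f u)) :=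
        mul_le_mul h1 h2 hgpos.le (by positivity)
    _ = Real.exp (2 * c) * Real.exp (g v) * ∑ u, Real.exp (f u) := by
        rw [two_mul, Real.exp_add]; ring

lemma softmax_le_one {V : Type*} [Fintype V] [Nonempty V] (f : V → ℝ) (v : V) :
    softmax f v ≤ 1 := by
  have hfpos : (0:ℝ) < ∑ u, Real.exp (f u) :=
    Finset.sum_pos (fun u _ => Real.exp_pos _) Finset.univ_nonempty
  unfold softmax
  rw [div_le_one hfpos]
  exact Finset.single_le_sum (fun u _ => (Real.exp_pos _).le) (Finset.mem_univ v)

lemma softmax_nonneg {V : Type*} [Fintype V] [Nonempty V] (f : V → ℝ) (v : V) :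
    0 ≤ softmax f v := by
  have hfpos : (0:ℝ) < ∑ u, Real.exp (f u) :=
    Finset.sum_pos (fun u _ => Real.exp_pos _) Finset.univ_nonempty
  exact div_nonneg (Real.exp_pos _).le hfpos.le

theorem proposition1_core {V : Type*} [Fintype V] [Nonempty V]
    (θi θj η μ : V → ℝ) (Δ : ℝ) (hΔ : 0 ≤ Δ)
    (hGlobal : ∀ v, |θi v - η v| ≤ Δ)
    (hLocal : ∀ v, |θj v - μ v| ≤ Δ) :
    ∀ v, |softmax (fun u => θi u + θj u) v - softmax (fun u => η u + μ u) v|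
      ≤ Real.exp (4 * Δ) - 1 := by
  intro v
  have hdiff : ∀ u, |(fun u => θi u + θj u) u - (fun u => η u + μ u) u| ≤ 2 * Δ := by
    intro u
    calc |(θi u + θj u) - (η u + μ u)| = |(θi u - η u) + (θj u - μ u)| := by ring_nf
      _ ≤ |θi u - η u| + |θj u - μ u| := abs_add_le _ _
      _ ≤ 2 * Δ := by linarith [hGlobal u, hLocal u]
  have hdiff' : ∀ u, |(fun u => η u + μ u) u - (fun u => θi u + θj u) u| ≤ 2 * Δ := by
    intro u; rw [abs_sub_comm]; exact hdiff u
  have A := softmax_le_exp_mul _ _ _ hdiff v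
  have B := softmax_le_exp_mul _ _ _ hdiff' v
  have h4 : (2 : ℝ) * (2 * Δ) = 4 * Δ := by ring
  rw [h4] at A B
  have hexp : (1:ℝ) ≤ Real.exp (4 * Δ) := Real.one_le_exp (by linarith)
  have h1 := softmax_le_one (fun u => θi u + θj u) v
  have h2 := softmax_le_one (fun u => η u + μ u) v
  have h3 := softmax_nonneg (fun u => θi u + θj u) v
  have h5 := softmax_nonneg (fun u => η u + μ u) v
  rw [abs_le]
  constructor
  · nlinarith
  · nlinarith
end
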